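/- Let X_a, X_b be linear subspaces of ℝⁿ with X_a ∩ X_b = {0}, and let π^b denote the orthogonal projection onto X_b^⊥. Let μ > 0, δ > 0, let ψ : X_a^⊥ → ℂ be a Schwartz function, and let V : X_b^⊥ → ℂ be a measurable function satisfying |V(w)| ≤ δ(1+‖w‖)^{−μ} for all w ∈ X_b^⊥. Then there exists a constant C > 0, depending only on X_a, X_b, μ and ψ, such that for all x_a ∈ X_a: ( ∫_{X_a^⊥} |V(π^b(x_a + w))|² |ψ(w)|² dw )^{1/2} ≤ C δ (1+‖x_a‖)^{−μ}. -/

import Mathlib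

/-!
Since `X_a ∩ X_b = {0}`, the projection `π^b` is injective on `X_a`, hence
`‖x_a‖ ≤ K ‖π^b x_a‖ ≤ K (‖π^b (x_a + w)‖ + ‖w‖)`. A Peetre-type inequality turns this into
`(1 + ‖π^b (x_a + w)‖)^(-μ) ≤ K^μ (1 + ‖w‖)^μ (1 + ‖x_a‖)^(-μ)`, and the growth `(1 + ‖w‖)^μ`
is absorbed by the Schwartz function `ψ`, so one may take `C = K^μ ‖(1 + ‖w‖)^μ ψ‖_{L²}` (plus one).
-/
open Submodule MeasureTheory

theorem one_add_rpow_neg_le_of_le_mul_add {a b c K μ : ℝ} (ha : 0 ≤ a) (hb : 0 ≤ b) (hc : 0 ≤ c)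
    (hK : 1 ≤ K) (hμ : 0 ≤ μ) (h : a ≤ K * (b + c)) :
    (1 + b) ^ (-μ) ≤ K ^ μ * (1 + c) ^ μ * (1 + a) ^ (-μ) := by
  have hpeetre : 1 + a ≤ K * (1 + b) * (1 + c) := by nlinarith [mul_nonneg hb hc]
  have hpow : (1 + a) ^ μ ≤ K ^ μ * (1 + c) ^ μ * (1 + b) ^ μ := by
    calc (1 + a) ^ μ ≤ (K * (1 + b) * (1 + c)) ^ μ := by gcongr
      _ = K ^ μ * (1 + c) ^ μ * (1 + b) ^ μ := by
        rw [Real.mul_rpow (by positivity) (by positivity),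
          Real.mul_rpow (by positivity) (by positivity)]
        ring
  rw [Real.rpow_neg (by positivity), Real.rpow_neg (by positivity), ← div_eq_mul_inv,
    inv_le_iff_one_le_mul₀' (by positivity), mul_div_assoc', one_le_div (by positivity)]
  linarith

section Projection

variable {𝕜 E : Type*} [RCLike 𝕜] [NormedAddCommGroup E] [InnerProductSpace 𝕜 E]

theorem exists_norm_le_mul_norm_orthogonalProjectionOnto_of_inf_eq_bot {U W : Submodule 𝕜 E}
    [FiniteDimensional 𝕜 U] [W.HasOrthogonalProjection] (h : U ⊓ W = ⊥) :
    ∃ K : ℝ, 1 ≤ K ∧ ∀ x ∈ U, ‖x‖ ≤ K * ‖Wᗮ.orthogonalProjectionOnto x‖ := by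
  set f : U →ₗ[𝕜] Wᗮ := Wᗮ.orthogonalProjectionOnto.toLinearMap ∘ₗ U.subtype
  have hf : LinearMap.ker f = ⊥ := by
    refine LinearMap.ker_eq_bot'.2 fun x hx => ?_
    have hxW : (x : E) ∈ W := by
      simpa [f, orthogonal_orthogonal] using hx
    have hxUW : (x : E) ∈ U ⊓ W := ⟨x.2, hxW⟩
    rw [h, mem_bot] at hxUW
    exact Subtype.ext hxUW
  obtain ⟨K, -, hK⟩ := f.exists_antilipschitzWith hf
  refine ⟨max K 1, le_max_right _ _, fun x hx => ?_⟩
  calc ‖x‖ ≤ K * ‖f ⟨x, hx⟩‖ := by simpa using hK.le_mul_dist ⟨x, hx⟩ 0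
    _ = K * ‖Wᗮ.orthogonalProjectionOnto x‖ := rfl
    _ ≤ max K 1 * ‖Wᗮ.orthogonalProjectionOnto x‖ := by gcongr; exact le_max_left _ _

theorem one_add_norm_orthogonalProjectionOnto_add_rpow_neg_le {W : Submodule 𝕜 E}
    [W.HasOrthogonalProjection] {K μ : ℝ} (hK : 1 ≤ K) (hμ : 0 ≤ μ) {x : E}
    (hx : ‖x‖ ≤ K * ‖W.orthogonalProjectionOnto x‖) (w : E) :
    (1 + ‖W.orthogonalProjectionOnto (x + w)‖) ^ (-μ) ≤
      K ^ μ * (1 + ‖w‖) ^ μ * (1 + ‖x‖) ^ (-μ) := by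
  refine one_add_rpow_neg_le_of_le_mul_add (norm_nonneg _) (norm_nonneg _) (norm_nonneg _) hK hμ
    (hx.trans ?_)
  have : ‖W.orthogonalProjectionOnto x‖ ≤ ‖W.orthogonalProjectionOnto (x + w)‖ + ‖w‖ :=
    calc ‖W.orthogonalProjectionOnto x‖
        = ‖W.orthogonalProjectionOnto (x + w) - W.orthogonalProjectionOnto w‖ := by simp
      _ ≤ ‖W.orthogonalProjectionOnto (x + w)‖ + ‖W.orthogonalProjectionOnto w‖ := norm_sub_le _ _
      _ ≤ ‖W.orthogonalProjectionOnto (x + w)‖ + ‖w‖ := by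
        gcongr; exact W.norm_orthogonalProjectionOnto_apply_le w
  gcongr

end Projection

namespace SchwartzMap

variable {E F : Type*} [NormedAddCommGroup E] [NormedSpace ℝ E] [NormedAddCommGroup F]
  [NormedSpace ℝ F]

theorem exists_one_add_norm_rpow_mul_le (f : 𝓢(E, F)) (s : ℝ) :
    ∃ C, ∀ x, (1 + ‖x‖) ^ s * ‖f x‖ ≤ C := by
  refine ⟨2 ^ ⌈s⌉₊ * (Finset.Iic (⌈s⌉₊, 0)).sup (fun m => SchwartzMap.seminorm ℝ m.1 m.2) f,
    fun x => ?_⟩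
  calc (1 + ‖x‖) ^ s * ‖f x‖ ≤ (1 + ‖x‖) ^ ⌈s⌉₊ * ‖iteratedFDeriv ℝ 0 f x‖ := by
        rw [norm_iteratedFDeriv_zero, ← Real.rpow_natCast]
        gcongr
        · linarith [norm_nonneg x]
        · exact Nat.le_ceil s
    _ ≤ _ := one_add_le_sup_seminorm_apply (m := (⌈s⌉₊, 0)) le_rfl le_rfl f x

variable [MeasurableSpace E] [BorelSpace E] (ν : Measure E) [ν.HasTemperateGrowth]

theorem integrable_one_add_norm_rpow_mul (f : 𝓢(E, F)) (s : ℝ) :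
    Integrable (fun x => (1 + ‖x‖) ^ s * ‖f x‖) ν := by
  set r : ℝ := (ν.integrablePower : ℝ)
  obtain ⟨C, hC⟩ := f.exists_one_add_norm_rpow_mul_le (s + r)
  have hmeas := f.continuous.norm.measurable
  refine ((Measure.integrable_pow_neg_integrablePower ν).const_mul C).mono'
    (Measurable.aestronglyMeasurable (by fun_prop)) ?_
  filter_upwards with x
  have hx : 0 < 1 + ‖x‖ := by positivity
  calc ‖(1 + ‖x‖) ^ s * ‖f x‖‖ = (1 + ‖x‖) ^ (-r) * ((1 + ‖x‖) ^ (s + r) * ‖f x‖) := by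
        rw [Real.norm_of_nonneg (by positivity), ← mul_assoc, ← Real.rpow_add hx]
        ring_nf
    _ ≤ (1 + ‖x‖) ^ (-r) * C := by gcongr; exact hC x
    _ = C * (1 + ‖x‖) ^ (-r) := mul_comm _ _

theorem integrable_one_add_norm_rpow_mul_sq (f : 𝓢(E, F)) (s : ℝ) :
    Integrable (fun x => ((1 + ‖x‖) ^ s * ‖f x‖) ^ 2) ν := by
  obtain ⟨C, hC⟩ := f.exists_one_add_norm_rpow_mul_le s
  have hmeas := f.continuous.norm.measurable
  refine ((f.integrable_one_add_norm_rpow_mul ν s).const_mul C).mono'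
    (Measurable.aestronglyMeasurable (by fun_prop)) ?_
  filter_upwards with x
  rw [Real.norm_of_nonneg (by positivity), sq]
  exact mul_le_mul_of_nonneg_right (hC x) (by positivity)

end SchwartzMap

theorem integral_rpow_half_le_of_le_sq_mul {α : Type*} [MeasurableSpace α] {ν : Measure α}
    {f g : α → ℝ} {c : ℝ} (hc : 0 ≤ c) (hf : ∀ x, 0 ≤ f x) (hg : Integrable g ν)
    (hfg : ∀ x, f x ≤ c ^ 2 * g x) :
    (∫ x, f x ∂ν) ^ (1 / 2 : ℝ) ≤ c * √(∫ x, g x ∂ν) := by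
  have hint : ∫ x, f x ∂ν ≤ c ^ 2 * ∫ x, g x ∂ν := by
    rw [← integral_const_mul]
    exact integral_mono_of_nonneg (.of_forall hf) (hg.const_mul _) (.of_forall hfg)
  rw [← Real.sqrt_eq_rpow, ← Real.sqrt_sq hc, ← Real.sqrt_mul (sq_nonneg c)]
  exact Real.sqrt_le_sqrt hint

/-- The `L²`-in-`X_a^⊥` estimate behind the `(Id − E_a) I_a E_a` bound: the square
integral of a decaying potential against a Schwartz bound state decays at rate `μ`
in `x_a`, with constant depending only on `X_a`, `X_b`, `μ`, `ψ`. -/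
theorem potential_bound_state_L2_decay (n : ℕ)
    (Xa Xb : Submodule ℝ (EuclideanSpace ℝ (Fin n))) (hXab : Xa ⊓ Xb = ⊥)
    (μ : ℝ) (hμ : 0 < μ)
    (ψ : SchwartzMap Xaᗮ ℂ) :
    ∃ C : ℝ, 0 < C ∧ ∀ (δ : ℝ) (V : Xbᗮ → ℂ), 0 < δ →
      Measurable V →
      (∀ w : Xbᗮ, ‖V w‖ ≤ δ * (1 + ‖w‖) ^ (-μ)) →
      ∀ xa : Xa,
        (∫ w : Xaᗮ,
            ‖V (orthogonalProjection Xbᗮ ((xa : EuclideanSpace ℝ (Fin n)) + w))‖ ^ 2 *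
              ‖ψ w‖ ^ 2) ^ (1/2 : ℝ) ≤
          C * δ * (1 + ‖(xa : EuclideanSpace ℝ (Fin n))‖) ^ (-μ) := by
  obtain ⟨K, hK, hXa⟩ := exists_norm_le_mul_norm_orthogonalProjectionOnto_of_inf_eq_bot hXab
  set G : ℝ := ∫ w, ((1 + ‖w‖) ^ μ * ‖ψ w‖) ^ 2
  refine ⟨K ^ μ * √G + 1, by positivity, fun δ V hδ _ hV xa => ?_⟩
  set t : ℝ := (1 + ‖(xa : EuclideanSpace ℝ (Fin n))‖) ^ (-μ)
  have hpointwise : ∀ w : Xaᗮ,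
      ‖V (Xbᗮ.orthogonalProjectionOnto (xa + w))‖ ^ 2 * ‖ψ w‖ ^ 2 ≤
        (δ * K ^ μ * t) ^ 2 * ((1 + ‖w‖) ^ μ * ‖ψ w‖) ^ 2 := by
    intro w
    have hVxw : ‖V (Xbᗮ.orthogonalProjectionOnto (xa + w))‖ ≤ δ * K ^ μ * t * (1 + ‖w‖) ^ μ :=
      calc _ ≤ δ * (1 + ‖Xbᗮ.orthogonalProjectionOnto (xa + w)‖) ^ (-μ) := hV _
        _ ≤ δ * (K ^ μ * (1 + ‖w‖) ^ μ * t) := by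
          gcongr
          exact one_add_norm_orthogonalProjectionOnto_add_rpow_neg_le hK hμ.le (hXa xa xa.2) w
        _ = δ * K ^ μ * t * (1 + ‖w‖) ^ μ := by ring
    rw [← mul_pow, ← mul_pow]
    refine pow_le_pow_left₀ (by positivity) ?_ 2
    calc _ ≤ δ * K ^ μ * t * (1 + ‖w‖) ^ μ * ‖ψ w‖ := by gcongr
      _ = _ := by ring
  have ht : 0 < t := by positivity
  calc _ ≤ δ * K ^ μ * t * √G := integral_rpow_half_le_of_le_sq_mul (by positivity)
        (fun _ => by positivity) (ψ.integrable_one_add_norm_rpow_mul_sq volume μ) hpointwise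
    _ ≤ (K ^ μ * √G + 1) * δ * t := by nlinarith [mul_pos hδ ht]
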